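/- arXiv:1904.01383 — 5 statements merged into one kernel-verified Lean document; each statement's English description precedes it below -/
import Mathlib

section
/- For any integers i ≥ 1, m ≥ 0 and real a ≥ 1, if n/a ≥ e^m, then n·e^{i/a}·i^m / (a^m·(a·e^{i/a} + n)^2) ≤ max( (1/a)·log^m(n/a), e·a^{-m}/n ). -/
/-! With `s = log (n / a)` and `t = i / a`, so that `n = a eˢ` and `i = a t`, the left-hand side
equals `e^(s+t) tᵐ / (a (eˢ + eᵗ)²)`, and it is already bounded by the first term of the maximum:
`e^(s+t) tᵐ ≤ sᵐ (eˢ + eᵗ)²`. If `t ≤ s` this is monotonicity of `x ↦ xᵐ`; if `s ≤ t`, the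
hypothesis `m ≤ s` makes `x ↦ xᵐ e⁻ˣ` decreasing on `[s, ∞)`, so `tᵐ ≤ sᵐ e^(t-s)`. -/

open Real

lemma pow_le_pow_mul_exp_sub {m : ℕ} {s t : ℝ} (hm : (m : ℝ) ≤ s) (hst : s ≤ t) :
    t ^ m ≤ s ^ m * exp (t - s) := by
  rcases m.eq_zero_or_pos with rfl | hm_pos
  · simpa using one_le_exp (sub_nonneg.2 hst)
  have hs : 0 < s := lt_of_lt_of_le (by exact_mod_cast hm_pos) hm
  have hratio : t / s ≤ exp ((t - s) / s) := by
    simpa [sub_div, div_self hs.ne'] using add_one_le_exp ((t - s) / s)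
  have hexponent : m * ((t - s) / s) ≤ t - s := by
    rw [mul_div_assoc', div_le_iff₀ hs, mul_comm (t - s)]
    exact mul_le_mul_of_nonneg_right hm (sub_nonneg.2 hst)
  calc t ^ m = s ^ m * (t / s) ^ m := by rw [div_pow, mul_div_cancel₀ _ (by positivity)]
    _ ≤ s ^ m * exp ((t - s) / s) ^ m := by gcongr; exact div_nonneg (by linarith) hs.le
    _ = s ^ m * exp (m * ((t - s) / s)) := by rw [← exp_nat_mul]
    _ ≤ s ^ m * exp (t - s) := by gcongr

lemma exp_add_mul_pow_le {m : ℕ} {s t : ℝ} (hm : (m : ℝ) ≤ s) (ht : 0 ≤ t) :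
    exp (s + t) * t ^ m ≤ s ^ m * (exp s + exp t) ^ 2 := by
  have hs : 0 ≤ s := (Nat.cast_nonneg m).trans hm
  rcases le_total t s with hts | hst
  · calc exp (s + t) * t ^ m ≤ exp (s + s) * s ^ m := by gcongr
      _ = s ^ m * exp s ^ 2 := by rw [exp_add]; ring
      _ ≤ s ^ m * (exp s + exp t) ^ 2 := by gcongr; linarith [exp_pos t]
  · calc exp (s + t) * t ^ m ≤ exp (s + t) * (s ^ m * exp (t - s)) := by
          gcongr; exact pow_le_pow_mul_exp_sub hm hst
      _ = s ^ m * exp t ^ 2 := by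
          rw [mul_left_comm, ← exp_add, sq, ← exp_add]; congr 2; ring
      _ ≤ s ^ m * (exp s + exp t) ^ 2 := by gcongr; linarith [exp_pos s]

theorem stmt0_general (n a : ℝ) (i m : ℕ) (ha : 1 ≤ a)
    (hna : Real.exp m ≤ n / a) :
    n * Real.exp ((i : ℝ) / a) * (i : ℝ) ^ m /
        (a ^ m * (a * Real.exp ((i : ℝ) / a) + n) ^ 2) ≤
      max (Real.log (n / a) ^ m / a) (Real.exp 1 * (1 / a ^ m) / n) := by
  have ha0 : 0 < a := one_pos.trans_le ha
  have hna0 : 0 < n / a := (exp_pos _).trans_le hna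
  set s := log (n / a)
  set t := (i : ℝ) / a
  have hn_eq : n = a * exp s := by rw [exp_log hna0, mul_div_cancel₀ _ ha0.ne']
  have hi_eq : (i : ℝ) = a * t := (mul_div_cancel₀ _ ha0.ne').symm
  have hsm : (m : ℝ) ≤ s := (le_log_iff_exp_le hna0).2 hna
  have hbound := exp_add_mul_pow_le hsm (div_nonneg i.cast_nonneg ha0.le)
  rw [exp_add] at hbound
  refine le_trans ?_ (le_max_left _ _)
  rw [hi_eq, hn_eq, div_le_div_iff₀ (by positivity) ha0]
  linear_combination a ^ (m + 2) * hbound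

/-- Lemma: for `i ≥ 1`, `m ∈ ℕ`, `a ≥ 1`, `n > 0` with `n/a ≥ e^m`, we have
`n·e^{i/a}·i^m / (a^m·(a·e^{i/a}+n)^2) ≤ max( log^m(n/a)/a , e·a^{-m}/n )`. -/
theorem stmt0 (n a : ℝ) (i m : ℕ) (hi : 1 ≤ i) (hn : 0 < n) (ha : 1 ≤ a)
    (hna : Real.exp m ≤ n / a) :
    n * Real.exp ((i : ℝ) / a) * (i : ℝ) ^ m /
        (a ^ m * (a * Real.exp ((i : ℝ) / a) + n) ^ 2) ≤
      max (Real.log (n / a) ^ m / a) (Real.exp 1 * (1 / a ^ m) / n) :=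
  stmt0_general n a i m ha hna
end

section
/- There exists a constant C > 0 (depending only on l and r) such that for all real l > r ≥ 0 and all reals n, a with a ≥ 1 and n/a ≥ e^{l-r}, the sum over i ≥ 1 of e^{i r/a}/(a·e^{i/a} + n)^l is at most C · (n^{r-l}/a^{r-1}) · log(n/a). -/
open Real Finset

set_option maxHeartbeats 1000000

/-- For reals `l > r ≥ 0` there is `C > 0` such that for all `n, a` with `a ≥ 1` and
`n/a ≥ e^{l-r}`, `Σ_{i≥1} e^{ir/a}/(a·e^{i/a}+n)^l ≤ C·(n^{r-l}/a^{r-1})·log(n/a)`. -/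
theorem stmt1 (l r : ℝ) (hr : 0 ≤ r) (hrl : r < l) :
    ∃ C : ℝ, 0 < C ∧ ∀ n a : ℝ, 1 ≤ a → Real.exp (l - r) ≤ n / a →
      ∑' i : ℕ, Real.exp (((i : ℝ) + 1) * r / a) /
          (a * Real.exp (((i : ℝ) + 1) / a) + n) ^ l ≤
        C * (n ^ (r - l) / a ^ (r - 1)) * Real.log (n / a) := by
  have hlr : 0 < l - r := by linarith
  have hl0 : 0 < l := lt_of_le_of_lt hr hrl
  refine ⟨Real.exp r * (1 + 1 / (l - r)) + Real.exp (l - r) / (l - r) ^ 2, by positivity, ?_⟩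
  intro n a ha hna
  have ha0 : (0 : ℝ) < a := by linarith
  have hna1 : (1 : ℝ) < n / a := lt_of_lt_of_le (Real.one_lt_exp_iff.mpr hlr) hna
  have hn0 : (0 : ℝ) < n := lt_trans ha0 ((one_lt_div ha0).mp hna1)
  set L : ℝ := Real.log (n / a) with hLdef
  have hL : l - r ≤ L := (Real.le_log_iff_exp_le (by positivity)).mpr hna
  have hL0 : 0 < L := lt_of_lt_of_le hlr hL
  set c : ℝ := (l - r) / a with hcdef
  have hc0 : 0 < c := by positivity
  have hcle : c ≤ l - r := by
    rw [hcdef, div_le_iff₀ ha0]; nlinarith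
  set q : ℝ := Real.exp (-c) with hqdef
  have hq0 : 0 < q := Real.exp_pos _
  have hq1 : q < 1 := Real.exp_lt_one_iff.mpr (by linarith)
  set f : ℕ → ℝ := fun i => Real.exp (((i : ℝ) + 1) * r / a) /
          (a * Real.exp (((i : ℝ) + 1) / a) + n) ^ l with hf
  have hfnonneg : ∀ i, 0 ≤ f i := by
    intro i
    have : (0:ℝ) < a * Real.exp (((i : ℝ) + 1) / a) + n := by positivity
    positivity
  -- key pointwise bound : f m ≤ a^(-l) * q^(m+1)
  have key : ∀ m : ℕ, f m ≤ a ^ (-l) * q ^ (m + 1) := by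
    intro m
    set t : ℝ := (m : ℝ) + 1 with htdef
    have ht0 : 0 < t := by positivity
    have hE0 : (0:ℝ) < a * Real.exp (t / a) := by positivity
    have hden : (a * Real.exp (t / a)) ^ l ≤ (a * Real.exp (t / a) + n) ^ l :=
      Real.rpow_le_rpow hE0.le (by linarith) hl0.le
    have h1 : f m ≤ Real.exp (t * r / a) / (a * Real.exp (t / a)) ^ l := by
      apply div_le_div_of_nonneg_left (Real.exp_pos _).le (Real.rpow_pos_of_pos hE0 l) hden
    refine h1.trans (le_of_eq ?_)
    have hEl : (a * Real.exp (t / a)) ^ l = a ^ l * Real.exp (t / a * l) := by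
      rw [Real.mul_rpow ha0.le (Real.exp_pos _).le, Real.exp_mul]
    have hqpow : q ^ (m + 1) = Real.exp (t * (-c)) := by
      rw [hqdef, ← Real.exp_nat_mul]
      congr 1
      push_cast [htdef]
      ring
    rw [hEl, hqpow, Real.rpow_neg ha0.le, hcdef]
    rw [div_eq_mul_inv, mul_inv, ← Real.exp_neg, ← mul_assoc,
      mul_comm (Real.exp (t * r / a)), mul_assoc, ← Real.exp_add]
    congr 2
    field_simp
    ring
  have hgsum : Summable fun i : ℕ => a ^ (-l) * q ^ i :=
    (summable_geometric_of_lt_one hq0.le hq1).mul_left _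
  have hsum : Summable f := by
    apply Summable.of_nonneg_of_le hfnonneg (fun i => ?_) hgsum
    refine (key i).trans ?_
    have : q ^ (i + 1) ≤ q ^ i := pow_le_pow_of_le_one hq0.le hq1.le (by omega)
    exact mul_le_mul_of_nonneg_left this (Real.rpow_nonneg ha0.le _)
  set N : ℕ := ⌈a * L⌉₊ with hNdef
  have hNge : a * L ≤ N := Nat.le_ceil _
  have hNle : (N : ℝ) ≤ a * L + 1 := (Nat.ceil_lt_add_one (by positivity)).le
  have hsplit := Summable.sum_add_tsum_nat_add (f := f) N hsum
  rw [← hsplit]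
  set M : ℝ := n ^ (r - l) * a ^ (1 - r) with hMdef
  have hM0 : 0 < M := by
    rw [hMdef]; exact mul_pos (Real.rpow_pos_of_pos hn0 _) (Real.rpow_pos_of_pos ha0 _)
  -- Part A
  have hA : ∑ i ∈ Finset.range N, f i ≤ (Real.exp r * (1 + 1 / (l - r))) * M * L := by
    have hterm : ∀ i ∈ Finset.range N, f i ≤ Real.exp r * (n / a) ^ r / n ^ l := by
      intro i hi
      have hi' : (i : ℝ) + 1 ≤ a * L + 1 := by
        have : (i : ℝ) + 1 ≤ N := by
          have := Finset.mem_range.mp hi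
          exact_mod_cast Nat.succ_le_of_lt this
        linarith
      have hnum : Real.exp (((i : ℝ) + 1) * r / a) ≤ Real.exp r * (n / a) ^ r := by
        rw [Real.rpow_def_of_pos (by positivity), ← hLdef, ← Real.exp_add]
        apply Real.exp_le_exp.mpr
        have h1 : ((i : ℝ) + 1) * r / a ≤ (a * L + 1) * r / a := by gcongr
        refine h1.trans ?_
        rw [div_le_iff₀ ha0]
        have h2 : r * 1 ≤ r * a := mul_le_mul_of_nonneg_left ha hr
        nlinarith [mul_nonneg hr hL0.le]
      have hden : n ^ l ≤ (a * Real.exp (((i : ℝ) + 1) / a) + n) ^ l := by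
        apply Real.rpow_le_rpow hn0.le _ hl0.le
        have : (0:ℝ) < a * Real.exp (((i : ℝ) + 1) / a) := by positivity
        linarith
      calc f i ≤ Real.exp (((i : ℝ) + 1) * r / a) / n ^ l :=
            div_le_div_of_nonneg_left (Real.exp_pos _).le (Real.rpow_pos_of_pos hn0 l) hden
        _ ≤ Real.exp r * (n / a) ^ r / n ^ l := by gcongr
    have h1 : ∑ i ∈ Finset.range N, f i ≤ N * (Real.exp r * (n / a) ^ r / n ^ l) := by
      calc ∑ i ∈ Finset.range N, f i ≤
          ∑ _i ∈ Finset.range N, Real.exp r * (n / a) ^ r / n ^ l :=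
            Finset.sum_le_sum hterm
        _ = N * (Real.exp r * (n / a) ^ r / n ^ l) := by
            rw [Finset.sum_const, Finset.card_range, nsmul_eq_mul]
    have hpos : (0:ℝ) ≤ Real.exp r * (n / a) ^ r / n ^ l := by positivity
    have h2 : (N : ℝ) ≤ (1 + 1 / (l - r)) * (a * L) := by
      have haL : l - r ≤ a * L := by nlinarith
      have : (1:ℝ) ≤ (a * L) / (l - r) := (one_le_div hlr).mpr haL
      have h3 : a * L + 1 ≤ a * L + (a * L) / (l - r) := by linarith
      refine hNle.trans (h3.trans (le_of_eq ?_))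
      field_simp
    have h4 : ∑ i ∈ Finset.range N, f i ≤
        ((1 + 1 / (l - r)) * (a * L)) * (Real.exp r * (n / a) ^ r / n ^ l) :=
      h1.trans (mul_le_mul_of_nonneg_right h2 hpos)
    refine h4.trans (le_of_eq ?_)
    rw [hMdef, Real.div_rpow hn0.le ha0.le, Real.rpow_sub hn0, Real.rpow_sub ha0,
      Real.rpow_one]
    have hnr : (0:ℝ) < n ^ r := Real.rpow_pos_of_pos hn0 r
    have hnl : (0:ℝ) < n ^ l := Real.rpow_pos_of_pos hn0 l
    have har : (0:ℝ) < a ^ r := Real.rpow_pos_of_pos ha0 r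
    field_simp
  -- Part B
  have hB : ∑' i, f (i + N) ≤ (Real.exp (l - r) / (l - r) ^ 2) * M * L := by
    have hqN : q ^ N ≤ (n / a) ^ (r - l) := by
      rw [hqdef, ← Real.exp_nat_mul, Real.rpow_def_of_pos (by positivity), ← hLdef]
      apply Real.exp_le_exp.mpr
      have : L * (l - r) ≤ (N : ℝ) * c := by
        rw [hcdef, ← mul_div_assoc, le_div_iff₀ ha0]
        nlinarith [mul_le_mul_of_nonneg_right hNge hlr.le]
      nlinarith
    have hpt : ∀ i : ℕ, f (i + N) ≤ ((n / a) ^ (r - l) * a ^ (-l)) * q ^ i := by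
      intro i
      refine (key (i + N)).trans ?_
      have : q ^ (i + N + 1) ≤ (n / a) ^ (r - l) * q ^ i := by
        have h1 : q ^ (i + N + 1) = q ^ N * q ^ i * q := by ring
        rw [h1]
        have h2 : q ^ N * q ^ i * q ≤ q ^ N * q ^ i * 1 :=
          mul_le_mul_of_nonneg_left hq1.le (by positivity)
        refine h2.trans ?_
        rw [mul_one]
        exact mul_le_mul_of_nonneg_right hqN (by positivity)
      calc a ^ (-l) * q ^ (i + N + 1) ≤ a ^ (-l) * ((n / a) ^ (r - l) * q ^ i) :=
            mul_le_mul_of_nonneg_left this (Real.rpow_nonneg ha0.le _)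
        _ = ((n / a) ^ (r - l) * a ^ (-l)) * q ^ i := by ring
    have hsum2 : Summable fun i : ℕ => f (i + N) :=
      (summable_nat_add_iff N).mpr hsum
    have hgeo : Summable fun i : ℕ => ((n / a) ^ (r - l) * a ^ (-l)) * q ^ i :=
      (summable_geometric_of_lt_one hq0.le hq1).mul_left _
    have h1 : ∑' i, f (i + N) ≤ ∑' i : ℕ, ((n / a) ^ (r - l) * a ^ (-l)) * q ^ i :=
      Summable.tsum_le_tsum hpt hsum2 hgeo
    rw [tsum_mul_left, tsum_geometric_of_lt_one hq0.le hq1] at h1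
    -- bound (1-q)⁻¹
    have hone : (l - r) / a * Real.exp (r - l) ≤ 1 - q := by
      have h2 : c + 1 ≤ Real.exp c := Real.add_one_le_exp c
      have h3 : c * Real.exp (-c) ≤ 1 - Real.exp (-c) := by
        have he : 0 < Real.exp (-c) := Real.exp_pos _
        have := mul_le_mul_of_nonneg_right h2 he.le
        rw [← Real.exp_add] at this
        simp at this
        nlinarith
      have h4 : Real.exp (r - l) ≤ Real.exp (-c) :=
        Real.exp_le_exp.mpr (by linarith)
      have := mul_le_mul_of_nonneg_left h4 hc0.le
      rw [hcdef] at *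
      nlinarith
    have hpos1 : (0:ℝ) < (l - r) / a * Real.exp (r - l) := by positivity
    have hinv : (1 - q)⁻¹ ≤ a * Real.exp (l - r) / (l - r) := by
      have h5 : (1 - q)⁻¹ ≤ ((l - r) / a * Real.exp (r - l))⁻¹ :=
        inv_anti₀ hpos1 hone
      refine h5.trans (le_of_eq ?_)
      rw [mul_inv, ← Real.exp_neg, neg_sub]
      field_simp
    have hDpos : (0:ℝ) ≤ (n / a) ^ (r - l) * a ^ (-l) := by positivity
    have h6 : ∑' i, f (i + N) ≤ ((n / a) ^ (r - l) * a ^ (-l)) *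
        (a * Real.exp (l - r) / (l - r)) :=
      h1.trans (mul_le_mul_of_nonneg_left hinv hDpos)
    have heq : ((n / a) ^ (r - l) * a ^ (-l)) * (a * Real.exp (l - r) / (l - r)) =
        (Real.exp (l - r) / (l - r)) * M := by
      rw [hMdef, Real.div_rpow hn0.le ha0.le, Real.rpow_sub ha0, Real.rpow_sub ha0,
        Real.rpow_neg ha0.le, Real.rpow_one]
      have har : (0:ℝ) < a ^ r := Real.rpow_pos_of_pos ha0 r
      have hal : (0:ℝ) < a ^ l := Real.rpow_pos_of_pos ha0 l
      field_simp
    rw [heq] at h6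
    refine h6.trans ?_
    have h7 : Real.exp (l - r) / (l - r) ≤ Real.exp (l - r) / (l - r) ^ 2 * L := by
      rw [div_le_iff₀ hlr, div_mul_eq_mul_div, div_mul_eq_mul_div, le_div_iff₀ (by positivity)]
      have := Real.exp_pos (l - r)
      have h8 := mul_le_mul_of_nonneg_left hL (by positivity : (0:ℝ) ≤ Real.exp (l - r) * (l - r))
      nlinarith [h8]
    calc Real.exp (l - r) / (l - r) * M ≤ (Real.exp (l - r) / (l - r) ^ 2 * L) * M :=
          mul_le_mul_of_nonneg_right h7 hM0.le
      _ = Real.exp (l - r) / (l - r) ^ 2 * M * L := by ring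
  have htarget : (Real.exp r * (1 + 1 / (l - r)) + Real.exp (l - r) / (l - r) ^ 2) *
      (n ^ (r - l) / a ^ (r - 1)) * L =
      (Real.exp r * (1 + 1 / (l - r))) * M * L +
      (Real.exp (l - r) / (l - r) ^ 2) * M * L := by
    have : n ^ (r - l) / a ^ (r - 1) = M := by
      rw [hMdef]
      rw [show (1 : ℝ) - r = -(r - 1) by ring, Real.rpow_neg ha0.le, div_eq_mul_inv]
    rw [this]
    ring
  rw [htarget]
  exact add_le_add hA hB
end

section
/- For every β ≥ β_0 > 0, M > 0, and b > 0 there exists a constant C (depending on β, b, M) such that for all sufficiently large n, if a ≥ C·n^{1/(1+2β)}·(log n)^{-1-1/(1+2β)} and a ≤ n/e, then h_n(a, f_0) < b for every sequence f_0 with sup_i i^{1+2β} f_{0,i}^2 ≤ M. -/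
/-!
Write `L = log (n / a)` and `c = a L`. In the `i`-th summand, `i f_i² ≤ M i^{-2β}` and the
weight `n² e^{i/a} / (a e^{i/a} + n)²` is at most `min (e^{i/a}) (e^{(2c - i)/a})`.
For `i ≤ 4βa` the summand is at most `M e^{4β} i^{-2β} / a`, and these terms add up to `o(1)`
as `a → ∞` (Cesàro). For `i ≥ 4βa` the function `i^{-2β} e^{i/(2a)}` is increasing, so the
summand is dominated by the two-sided geometric profile `M c^{-2β} (n/a) e^{-|i - c|/(2a)} / a`,
whose sum is `O(n a^{-2β} L^{-2β} / a)`. After the factor `1/L²` this peak term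
`n a^{-(1+2β)} L^{-(2+2β)}` is at most `n^{-β}` if `L ≤ ε log n` with `ε = β/(1+2β)`, and at most
`C^{-(1+2β)} ε^{-(2+2β)}` otherwise, by the lower bound on `a`. That lower bound tends to infinity
with `n`, so for large `C` and `n` each of the three contributions is below `b/3`.
-/

/-- `h_n(a,f₀) = (1/log²(n/a)) Σ_{i≥1} n²·i·e^{i/a}·f₀ᵢ²/(a(a e^{i/a}+n)²)`. -/
noncomputable def hfun (n a : ℝ) (f : ℕ → ℝ) : ℝ :=
  (1 / Real.log (n / a) ^ 2) *
    ∑' i : ℕ, n ^ 2 * ((i : ℝ) + 1) * Real.exp (((i : ℝ) + 1) / a) * f (i + 1) ^ 2 /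
      (a * (a * Real.exp (((i : ℝ) + 1) / a) + n) ^ 2)

open Real Filter Finset Topology

lemma exp_neg_abs_div_le_pow {τ x : ℝ} (hτ : 0 < τ) {k : ℕ} (hk : (k : ℝ) ≤ |x|) :
    exp (-|x| / τ) ≤ exp (-1 / τ) ^ k := by
  rw [← exp_nat_mul, exp_le_exp, mul_div_assoc', mul_neg_one]
  gcongr

lemma inv_one_sub_exp_neg_inv_le {τ : ℝ} (hτ : 0 < τ) : (1 - exp (-1 / τ))⁻¹ ≤ 1 + τ := by
  refine inv_le_of_inv_le₀ (by positivity) ?_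
  have hexp : (1 + τ) / τ ≤ exp (1 / τ) := by
    calc (1 + τ) / τ = 1 / τ + 1 := by field_simp
      _ ≤ exp (1 / τ) := add_one_le_exp _
  have : exp (-1 / τ) ≤ τ / (1 + τ) := by
    rw [neg_div, exp_neg, ← inv_div _ τ]
    exact inv_anti₀ (by positivity) hexp
  calc (1 + τ)⁻¹ = 1 - τ / (1 + τ) := by field_simp; ring
    _ ≤ 1 - exp (-1 / τ) := by linarith

lemma exp_neg_abs_sub_div_le_of_ceil (c : ℝ) {τ : ℝ} (hτ : 0 < τ) (k : ℕ) :
    exp (-|((k + ⌈c⌉₊ : ℕ) : ℝ) - c| / τ) ≤ exp (-1 / τ) ^ k := by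
  refine exp_neg_abs_div_le_pow hτ (le_trans ?_ (le_abs_self _))
  push_cast
  linarith [Nat.le_ceil c]

lemma exp_neg_one_div_lt_one {τ : ℝ} (hτ : 0 < τ) : exp (-1 / τ) < 1 :=
  exp_lt_one_iff.2 (div_neg_of_neg_of_pos (by norm_num) hτ)

lemma summable_exp_neg_abs_sub_div (c : ℝ) {τ : ℝ} (hτ : 0 < τ) :
    Summable fun i : ℕ => exp (-|(i : ℝ) - c| / τ) :=
  (summable_nat_add_iff ⌈c⌉₊).1 <| Summable.of_nonneg_of_le (fun _ => (exp_pos _).le)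
    (exp_neg_abs_sub_div_le_of_ceil c hτ)
    (summable_geometric_of_lt_one (exp_pos _).le (exp_neg_one_div_lt_one hτ))

lemma tsum_exp_neg_abs_sub_div_le (c : ℝ) {τ : ℝ} (hτ : 0 < τ) :
    ∑' i : ℕ, exp (-|(i : ℝ) - c| / τ) ≤ 2 * (1 + τ) := by
  set r := exp (-1 / τ)
  have hr : r < 1 := exp_neg_one_div_lt_one hτ
  have hgeom : ∑' k : ℕ, r ^ k = (1 - r)⁻¹ := tsum_geometric_of_lt_one (exp_pos _).le hr
  have hsummable := summable_geometric_of_lt_one (exp_pos _).le hr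
  set m := ⌈c⌉₊
  have head : ∀ i ∈ range m, exp (-|(i : ℝ) - c| / τ) ≤ r ^ (m - 1 - i) := by
    intro i hi
    have hi : i < m := mem_range.1 hi
    refine exp_neg_abs_div_le_pow hτ (le_trans ?_ (neg_le_abs _))
    have : ((m - 1 : ℕ) : ℝ) < c := Nat.lt_ceil.1 (by omega)
    rw [Nat.cast_sub (by omega : i ≤ m - 1)]
    linarith
  rw [← (summable_exp_neg_abs_sub_div c hτ).sum_add_tsum_nat_add m]
  calc _ ≤ ∑ i ∈ range m, r ^ (m - 1 - i) + ∑' k : ℕ, r ^ k :=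
        add_le_add (sum_le_sum head) <| Summable.tsum_le_tsum (exp_neg_abs_sub_div_le_of_ceil c hτ)
          ((summable_nat_add_iff m).2 (summable_exp_neg_abs_sub_div c hτ)) hsummable
    _ ≤ ∑' k : ℕ, r ^ k + ∑' k : ℕ, r ^ k := by
        rw [sum_range_reflect (fun i => r ^ i) m]
        gcongr
        exact hsummable.sum_le_tsum _ (fun i _ => by positivity)
    _ ≤ 2 * (1 + τ) := by
        rw [hgeom]; linarith [inv_one_sub_exp_neg_inv_le hτ]

lemma tendsto_inv_mul_sum_range_floor_rpow_neg {p κ : ℝ} (hp : 0 < p) (hκ : 0 < κ) :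
    Tendsto (fun a : ℝ => a⁻¹ * ∑ i ∈ range ⌊κ * a⌋₊, ((i : ℝ) + 1) ^ (-p)) atTop (𝓝 0) := by
  have hu : Tendsto (fun i : ℕ => ((i : ℝ) + 1) ^ (-p)) atTop (𝓝 0) :=
    (tendsto_rpow_neg_atTop hp).comp (tendsto_atTop_add_const_right _ 1 tendsto_natCast_atTop_atTop)
  have hfloor : Tendsto (fun a : ℝ => ⌊κ * a⌋₊) atTop atTop :=
    tendsto_nat_floor_atTop.comp (tendsto_id.const_mul_atTop hκ)
  have hcesaro := (hu.cesaro.comp hfloor).const_mul κ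
  rw [mul_zero] at hcesaro
  refine tendsto_of_tendsto_of_tendsto_of_le_of_le' tendsto_const_nhds hcesaro ?_ ?_
  · filter_upwards [eventually_ge_atTop 0] with a ha
    positivity
  · filter_upwards [eventually_gt_atTop 0, hfloor.eventually_ge_atTop 1] with a ha hK
    have hK' : (0 : ℝ) < (⌊κ * a⌋₊ : ℝ) := by exact_mod_cast hK
    have : a⁻¹ ≤ κ * (⌊κ * a⌋₊ : ℝ)⁻¹ := by
      rw [← div_eq_mul_inv, le_div_iff₀ hK', inv_mul_le_iff₀ ha, mul_comm]
      exact Nat.floor_le (by positivity)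
    simp only [Function.comp_apply, ← mul_assoc]
    gcongr

lemma hasSum_ite_add_one_le (g : ℕ → ℝ) {X : ℝ} (hX : 0 ≤ X) :
    HasSum (fun i : ℕ => if (i : ℝ) + 1 ≤ X then g i else 0) (∑ i ∈ range ⌊X⌋₊, g i) := by
  have hmem : ∀ i : ℕ, (i : ℝ) + 1 ≤ X ↔ i ∈ range ⌊X⌋₊ := fun i => by
    rw [mem_range, Nat.lt_iff_add_one_le, Nat.le_floor_iff hX]; push_cast; rfl
  simp_rw [hmem]
  have : HasSum (fun i => if i ∈ range ⌊X⌋₊ then g i else 0)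
      (∑ i ∈ range ⌊X⌋₊, if i ∈ range ⌊X⌋₊ then g i else 0) :=
    hasSum_sum_of_ne_finset_zero fun i hi => if_neg hi
  rwa [sum_congr rfl fun i hi => if_pos hi] at this

lemma rpow_neg_mul_exp_le_of_le {β a x c : ℝ} (hβ : 0 < β) (ha : 0 < a) (hx : 4 * β * a ≤ x)
    (hxc : x ≤ c) : x ^ (-(2 * β)) * exp (x / (2 * a)) ≤ c ^ (-(2 * β)) * exp (c / (2 * a)) := by
  have hx0 : 0 < x := lt_of_lt_of_le (by positivity) hx
  have hc0 : 0 < c := hx0.trans_le hxc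
  rw [rpow_def_of_pos hx0, rpow_def_of_pos hc0, ← exp_add, ← exp_add, exp_le_exp]
  have hlog : log c - log x ≤ (c - x) / x := by
    rw [← log_div hc0.ne' hx0.ne', sub_div, div_self hx0.ne']
    exact log_le_sub_one_of_pos (by positivity)
  have hslope : 2 * β * ((c - x) / x) ≤ (c - x) / (2 * a) := by
    rw [mul_div_assoc', div_le_div_iff₀ hx0 (by positivity)]
    nlinarith [sub_nonneg.2 hxc]
  have := mul_le_mul_of_nonneg_left hlog (by positivity : (0 : ℝ) ≤ 2 * β)
  have hsplit : (c - x) / (2 * a) = c / (2 * a) - x / (2 * a) := sub_div _ _ _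
  linarith

lemma rpow_neg_mul_le_of_le_exp {β a c x φ : ℝ} (hβ : 0 < β) (ha : 0 < a) (hc : 0 < c)
    (hx : 0 < x) (hφ : 0 ≤ φ) (hφx : φ ≤ exp (x / a)) (hφc : φ ≤ exp ((2 * c - x) / a)) :
    x ^ (-(2 * β)) * φ ≤ (if x ≤ 4 * β * a then exp (4 * β) * x ^ (-(2 * β)) else 0) +
      c ^ (-(2 * β)) * exp (c / a) * exp (-|x - c| / (2 * a)) := by
  have hlow_nonneg : 0 ≤ if x ≤ 4 * β * a then exp (4 * β) * x ^ (-(2 * β)) else 0 := by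
    split_ifs <;> positivity
  have hpeak_nonneg : 0 ≤ c ^ (-(2 * β)) * exp (c / a) * exp (-|x - c| / (2 * a)) := by
    positivity
  rcases le_or_gt x c with hxc | hcx
  · by_cases hx4 : x ≤ 4 * β * a
    · rw [if_pos hx4, mul_comm (exp _)]
      calc x ^ (-(2 * β)) * φ ≤ x ^ (-(2 * β)) * exp (4 * β) := by
            gcongr
            exact hφx.trans (exp_le_exp.2 ((div_le_iff₀ ha).2 hx4))
        _ ≤ _ := le_add_of_nonneg_right hpeak_nonneg
    · rw [if_neg hx4, zero_add, abs_sub_comm, abs_of_nonneg (sub_nonneg.2 hxc)]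
      calc x ^ (-(2 * β)) * φ
          ≤ x ^ (-(2 * β)) * exp (x / (2 * a)) * exp (x / (2 * a)) := by
            rw [mul_assoc, ← exp_add, ← add_div, ← two_mul, mul_div_mul_left _ _ two_ne_zero]
            gcongr
        _ ≤ c ^ (-(2 * β)) * exp (c / (2 * a)) * exp (x / (2 * a)) :=
            mul_le_mul_of_nonneg_right (rpow_neg_mul_exp_le_of_le hβ ha (not_le.1 hx4).le hxc)
              (exp_pos _).le
        _ = c ^ (-(2 * β)) * exp (c / a) * exp (-(c - x) / (2 * a)) := by
            rw [mul_assoc, mul_assoc, ← exp_add, ← exp_add]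
            congr 2
            field_simp
            ring
  · rw [abs_of_pos (sub_pos.2 hcx)]
    calc x ^ (-(2 * β)) * φ ≤ c ^ (-(2 * β)) * exp ((2 * c - x) / a) :=
          mul_le_mul (rpow_le_rpow_of_nonpos hc hcx.le (by linarith)) hφc hφ (by positivity)
      _ ≤ c ^ (-(2 * β)) * exp (c / a) * exp (-(x - c) / (2 * a)) := by
          rw [mul_assoc, ← exp_add]
          gcongr
          rw [div_add_div _ _ ha.ne' (by positivity), div_le_div_iff₀ ha (by positivity)]
          nlinarith [mul_nonneg (mul_nonneg ha.le ha.le) (sub_nonneg.2 hcx.le)]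
      _ ≤ _ := le_add_of_nonneg_left hlow_nonneg

lemma mul_sq_le_of_rpow_mul_sq_le {β M x y : ℝ} (hx : 0 < x) (h : x ^ (2 * β + 1) * y ^ 2 ≤ M) :
    x * y ^ 2 ≤ M * x ^ (-(2 * β)) :=
  calc x * y ^ 2 = x ^ (-(2 * β)) * (x ^ (2 * β + 1) * y ^ 2) := by
        rw [← mul_assoc, ← rpow_add hx, neg_add_cancel_left, rpow_one]
    _ ≤ x ^ (-(2 * β)) * M := by gcongr
    _ = M * x ^ (-(2 * β)) := mul_comm _ _

lemma sq_mul_div_mul_add_sq_le_self {n a u : ℝ} (hn : 0 < n) (ha : 0 ≤ a) (hu : 0 ≤ u) :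
    n ^ 2 * u / (a * u + n) ^ 2 ≤ u := by
  rw [div_le_iff₀ (by positivity), mul_comm]
  gcongr
  linarith [mul_nonneg ha hu]

lemma sq_mul_div_mul_add_sq_le_div {n a u : ℝ} (hn : 0 ≤ n) (ha : 0 < a) (hu : 0 < u) :
    n ^ 2 * u / (a * u + n) ^ 2 ≤ (n / a) ^ 2 / u :=
  calc n ^ 2 * u / (a * u + n) ^ 2 ≤ n ^ 2 * u / (a * u) ^ 2 := by gcongr; linarith
    _ = (n / a) ^ 2 / u := by field_simp

-- `hterm n a f i` is the summand of index `i + 1` in the paper's sum.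
noncomputable def hterm (n a : ℝ) (f : ℕ → ℝ) (i : ℕ) : ℝ :=
  n ^ 2 * ((i : ℝ) + 1) * exp (((i : ℝ) + 1) / a) * f (i + 1) ^ 2 /
    (a * (a * exp (((i : ℝ) + 1) / a) + n) ^ 2)

lemma hfun_eq_tsum_hterm (n a : ℝ) (f : ℕ → ℝ) :
    hfun n a f = 1 / log (n / a) ^ 2 * ∑' i, hterm n a f i := rfl

lemma hterm_nonneg {n a : ℝ} (ha : 0 ≤ a) (f : ℕ → ℝ) (i : ℕ) : 0 ≤ hterm n a f i := by
  unfold hterm; positivity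

noncomputable def lowSum (β a : ℝ) : ℝ :=
  a⁻¹ * ∑ i ∈ range ⌊4 * β * a⌋₊, ((i : ℝ) + 1) ^ (-(2 * β))

noncomputable def peakTerm (β n a : ℝ) : ℝ :=
  n * a ^ (-(1 + 2 * β)) * log (n / a) ^ (-(2 + 2 * β))

section
variable {β M n a : ℝ} {f : ℕ → ℝ}

lemma hterm_le (hβ : 0 < β) (hM : 0 ≤ M) (ha : 0 < a) (hna : 1 < n / a)
    (hf : ∀ i : ℕ, 1 ≤ i → (i : ℝ) ^ (2 * β + 1) * f i ^ 2 ≤ M) (i : ℕ) :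
    hterm n a f i ≤ M / a *
      ((if (i : ℝ) + 1 ≤ 4 * β * a then exp (4 * β) * ((i : ℝ) + 1) ^ (-(2 * β)) else 0) +
        (a * log (n / a)) ^ (-(2 * β)) * (n / a) *
          exp (-|(i : ℝ) - (a * log (n / a) - 1)| / (2 * a))) := by
  set x : ℝ := (i : ℝ) + 1 with hx
  set c := a * log (n / a) with hc
  set u := exp (x / a) with hu
  have hn : 0 < n := by linarith [(one_lt_div ha).1 hna]
  have hfx : x * f (i + 1) ^ 2 ≤ M * x ^ (-(2 * β)) :=
    mul_sq_le_of_rpow_mul_sq_le (by positivity) (by rw [hx]; exact_mod_cast hf (i + 1) (by omega))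
  have hφc : n ^ 2 * u / (a * u + n) ^ 2 ≤ exp ((2 * c - x) / a) := by
    rw [show (2 * c - x) / a = log (n / a) + log (n / a) - x / a by rw [hc]; field_simp; ring,
      exp_sub, exp_add, exp_log (by positivity), ← sq]
    exact sq_mul_div_mul_add_sq_le_div hn.le ha (exp_pos _)
  have hprofile := rpow_neg_mul_le_of_le_exp hβ ha (mul_pos ha (log_pos hna)) (by positivity)
    (by positivity) (sq_mul_div_mul_add_sq_le_self hn ha.le (exp_pos _).le) hφc
  rw [show c / a = log (n / a) by rw [hc]; field_simp, exp_log (by positivity),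
    show x - c = (i : ℝ) - (c - 1) by ring] at hprofile
  calc hterm n a f i = x * f (i + 1) ^ 2 / a * (n ^ 2 * u / (a * u + n) ^ 2) := by
        rw [hterm, ← hx, ← hu]; field_simp
    _ ≤ M * x ^ (-(2 * β)) / a * (n ^ 2 * u / (a * u + n) ^ 2) := by gcongr
    _ = M / a * (x ^ (-(2 * β)) * (n ^ 2 * u / (a * u + n) ^ 2)) := by ring
    _ ≤ _ := by gcongr

lemma tsum_hterm_le (hβ : 0 < β) (hM : 0 ≤ M) (ha : 0 < a) (hna : 1 < n / a)
    (hf : ∀ i : ℕ, 1 ≤ i → (i : ℝ) ^ (2 * β + 1) * f i ^ 2 ≤ M) :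
    ∑' i, hterm n a f i ≤ M * exp (4 * β) * lowSum β a +
      2 * (1 + 2 * a) / a * M * ((a * log (n / a)) ^ (-(2 * β)) * (n / a)) := by
  set c := a * log (n / a)
  have hc : 0 < c := mul_pos ha (log_pos hna)
  have hna0 : 0 < n / a := by linarith
  have hlow := hasSum_ite_add_one_le (fun i : ℕ => exp (4 * β) * ((i : ℝ) + 1) ^ (-(2 * β)))
    (X := 4 * β * a) (by positivity)
  rw [← mul_sum] at hlow
  have hpeak := (summable_exp_neg_abs_sub_div (c - 1) (by positivity : 0 < 2 * a)).mul_left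
    (c ^ (-(2 * β)) * (n / a))
  have hbound := (hlow.summable.add hpeak).mul_left (M / a)
  calc ∑' i, hterm n a f i ≤ _ := Summable.tsum_le_tsum (hterm_le hβ hM ha hna hf)
        (hbound.of_nonneg_of_le (hterm_nonneg ha.le f) (hterm_le hβ hM ha hna hf)) hbound
    _ = M / a * (exp (4 * β) * ∑ i ∈ range ⌊4 * β * a⌋₊, ((i : ℝ) + 1) ^ (-(2 * β)) +
          c ^ (-(2 * β)) * (n / a) * ∑' i : ℕ, exp (-|(i : ℝ) - (c - 1)| / (2 * a))) := by
        rw [tsum_mul_left, hlow.summable.tsum_add hpeak, hlow.tsum_eq, tsum_mul_left]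
    _ ≤ M / a * (exp (4 * β) * ∑ i ∈ range ⌊4 * β * a⌋₊, ((i : ℝ) + 1) ^ (-(2 * β)) +
          c ^ (-(2 * β)) * (n / a) * (2 * (1 + 2 * a))) := by
        gcongr
        exact tsum_exp_neg_abs_sub_div_le _ (by positivity)
    _ = _ := by rw [lowSum]; ring

lemma hfun_le (hβ : 0 < β) (hM : 0 ≤ M) (ha : 1 ≤ a) (hna : exp 1 ≤ n / a)
    (hf : ∀ i : ℕ, 1 ≤ i → (i : ℝ) ^ (2 * β + 1) * f i ^ 2 ≤ M) :
    hfun n a f ≤ M * exp (4 * β) * lowSum β a + 6 * M * peakTerm β n a := by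
  have ha0 : 0 < a := by linarith
  have hna0 : 0 < n / a := (exp_pos 1).trans_le hna
  have hL : 1 ≤ log (n / a) := (le_log_iff_exp_le hna0).2 hna
  have hpeak : peakTerm β n a = (a * log (n / a)) ^ (-(2 * β)) * (n / a) / log (n / a) ^ 2 := by
    rw [peakTerm, mul_rpow ha0.le (by linarith), show -(1 + 2 * β) = -(2 * β) - 1 by ring,
      show -(2 + 2 * β) = -(2 * β) - 2 by ring, rpow_sub ha0, rpow_sub (by linarith), rpow_one,
      rpow_two]
    ring
  have hpeak_nonneg : 0 ≤ peakTerm β n a := by rw [hpeak]; positivity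
  have hlow_nonneg : 0 ≤ M * exp (4 * β) * lowSum β a := by rw [lowSum]; positivity
  have hL2 : 1 / log (n / a) ^ 2 ≤ 1 := by rw [div_le_one (by positivity)]; nlinarith
  calc hfun n a f ≤ 1 / log (n / a) ^ 2 * (M * exp (4 * β) * lowSum β a +
        2 * (1 + 2 * a) / a * M * ((a * log (n / a)) ^ (-(2 * β)) * (n / a))) := by
        rw [hfun_eq_tsum_hterm]
        gcongr
        exact tsum_hterm_le hβ hM ha0 ((one_lt_exp_iff.2 one_pos).trans_le hna) hf
    _ = 1 / log (n / a) ^ 2 * (M * exp (4 * β) * lowSum β a) +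
        2 * (1 + 2 * a) / a * M * peakTerm β n a := by rw [hpeak]; ring
    _ ≤ M * exp (4 * β) * lowSum β a + 6 * M * peakTerm β n a := by
        refine add_le_add (mul_le_of_le_one_left hlow_nonneg hL2) ?_
        gcongr
        rw [div_le_iff₀ ha0]; linarith

end

lemma tendsto_mul_rpow_mul_log_rpow_atTop {C s : ℝ} (hC : 0 < C) (hs : 0 < s) :
    Tendsto (fun n : ℝ => C * n ^ s * log n ^ (-1 - s)) atTop atTop := by
  have hratio : Tendsto (fun n : ℝ => log n ^ (1 + s) / n ^ s) atTop (𝓝[>] 0) := by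
    refine tendsto_nhdsWithin_iff.2
      ⟨(isLittleO_log_rpow_rpow_atTop _ hs).tendsto_div_nhds_zero, ?_⟩
    filter_upwards [eventually_gt_atTop 1] with n hn
    have := log_pos hn
    exact div_pos (rpow_pos_of_pos this _) (rpow_pos_of_pos (by linarith) _)
  refine (hratio.inv_tendsto_nhdsGT_zero.const_mul_atTop hC).congr' ?_
  filter_upwards [eventually_gt_atTop 1] with n hn
  rw [Pi.inv_apply, inv_div, show -1 - s = -(1 + s) by ring, rpow_neg (log_pos hn).le]
  ring

lemma peakTerm_le {β C n a : ℝ} (hβ : 0 < β) (hC : 0 < C) (hn : 1 < n)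
    (ha : 0 < a) (hna : exp 1 ≤ n / a)
    (haC : C * n ^ (1 / (1 + 2 * β)) * log n ^ (-1 - 1 / (1 + 2 * β)) ≤ a) :
    peakTerm β n a ≤ n ^ (-β) + C ^ (-(1 + 2 * β)) * (β / (1 + 2 * β)) ^ (-(2 + 2 * β)) := by
  rw [peakTerm]
  set p := 1 + 2 * β
  have hp0 : 0 < p := by positivity
  have hn0 : 0 < n := by linarith
  have hℓ : 0 < log n := log_pos hn
  have hL : 1 ≤ log (n / a) := (le_log_iff_exp_le ((exp_pos 1).trans_le hna)).2 hna
  set L := log (n / a) with hLdef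
  have hLpow : 0 < L ^ (-(2 + 2 * β)) := rpow_pos_of_pos (by linarith) _
  rcases le_or_gt L (β / p * log n) with hsmall | hlarge
  · have hlog_a : log a = log n - L := by rw [hLdef, log_div hn0.ne' ha.ne']; ring
    have hexp : n * a ^ (-p) ≤ n ^ (-β) := by
      rw [rpow_def_of_pos ha, rpow_def_of_pos hn0, hlog_a]
      nth_rewrite 1 [← exp_log hn0]
      rw [← exp_add, exp_le_exp]
      have : p * L ≤ β * log n := by
        rw [div_mul_eq_mul_div, le_div_iff₀ hp0] at hsmall; linarith
      nlinarith
    have hL1 : L ^ (-(2 + 2 * β)) ≤ 1 := rpow_le_one_of_one_le_of_nonpos hL (by linarith)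
    calc n * a ^ (-p) * L ^ (-(2 + 2 * β)) ≤ n ^ (-β) * 1 :=
          mul_le_mul hexp hL1 hLpow.le (by positivity)
      _ ≤ _ := by rw [mul_one]; exact le_add_of_nonneg_right (by positivity)
  · have ha_pow : a ^ (-p) ≤ C ^ (-p) * n⁻¹ * log n ^ (2 + 2 * β) := by
      calc a ^ (-p) ≤ (C * n ^ (1 / p) * log n ^ (-1 - 1 / p)) ^ (-p) :=
            rpow_le_rpow_of_nonpos (by positivity) haC (by linarith)
        _ = C ^ (-p) * n⁻¹ * log n ^ (2 + 2 * β) := by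
            have hn_exp : 1 / p * -p = -1 := by field_simp
            have hℓ_exp : (-1 - 1 / p) * -p = 2 + 2 * β := by field_simp; ring
            rw [mul_rpow (by positivity) (by positivity), mul_rpow hC.le (by positivity),
              ← rpow_mul hn0.le, ← rpow_mul hℓ.le, hn_exp, hℓ_exp, rpow_neg_one]
    have hL_pow : L ^ (-(2 + 2 * β)) ≤ (β / p) ^ (-(2 + 2 * β)) * log n ^ (-(2 + 2 * β)) := by
      rw [← mul_rpow (by positivity) hℓ.le]
      exact rpow_le_rpow_of_nonpos (by positivity) hlarge.le (by linarith)
    calc n * a ^ (-p) * L ^ (-(2 + 2 * β))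
        ≤ n * (C ^ (-p) * n⁻¹ * log n ^ (2 + 2 * β)) *
            ((β / p) ^ (-(2 + 2 * β)) * log n ^ (-(2 + 2 * β))) := by gcongr
      _ = C ^ (-p) * (β / p) ^ (-(2 + 2 * β)) := by
          rw [rpow_neg hℓ.le]
          field_simp
      _ ≤ _ := le_add_of_nonneg_left (by positivity)

/-- For every `β ≥ β₀ > 0`, `M > 0`, `b > 0` there is a constant `C` such that for all
sufficiently large `n`: if `a ≥ C·n^{1/(1+2β)}·(log n)^{-1-1/(1+2β)}` and `a ≤ n/e`, then
`h_n(a,f₀) < b` for every `f₀` in the hyperrectangle `Θ^β(M)`. -/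
theorem stmt4 (β₀ β M b : ℝ) (hβ₀ : 0 < β₀) (hβ : β₀ ≤ β) (hM : 0 < M) (hb : 0 < b) :
    ∃ C : ℝ, 0 < C ∧ ∃ N : ℝ, ∀ n : ℝ, N ≤ n → ∀ a : ℝ,
      C * n ^ (1 / (1 + 2 * β)) * Real.log n ^ (-1 - 1 / (1 + 2 * β)) ≤ a →
      a ≤ n / Real.exp 1 →
      ∀ f : ℕ → ℝ, (∀ i : ℕ, 1 ≤ i → (i : ℝ) ^ (2 * β + 1) * f i ^ 2 ≤ M) →
      hfun n a f < b := by
  have hβ0 : 0 < β := hβ₀.trans_le hβ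
  have hb3 : 0 < b / 3 := by positivity
  set K := 6 * M * (β / (1 + 2 * β)) ^ (-(2 + 2 * β))
  obtain ⟨C, hC, hCb⟩ : ∃ C, 0 < C ∧ K * C ^ (-(1 + 2 * β)) < b / 3 :=
    ((eventually_gt_atTop 0).and (((tendsto_rpow_neg_atTop (by positivity)).const_mul K)
      |>.eventually_lt_const (by rwa [mul_zero]))).exists
  obtain ⟨A, hA⟩ : ∃ A, ∀ a ≥ A, M * exp (4 * β) * lowSum β a < b / 3 :=
    eventually_atTop.1 <| ((tendsto_inv_mul_sum_range_floor_rpow_neg (by positivity)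
      (by positivity)).const_mul _).eventually_lt_const (by rwa [mul_zero])
  obtain ⟨N, hN⟩ := eventually_atTop.1 <| (eventually_gt_atTop 1).and <|
    (((tendsto_rpow_neg_atTop hβ0).const_mul (6 * M)).eventually_lt_const
      (show 6 * M * 0 < b / 3 by rwa [mul_zero])).and
    ((tendsto_mul_rpow_mul_log_rpow_atTop hC (s := 1 / (1 + 2 * β))
      (by positivity)).eventually_ge_atTop (max A 1))
  refine ⟨C, hC, N, fun n hn a haC han f hf => ?_⟩
  obtain ⟨hn1, hnβ, hlower⟩ := hN n hn
  obtain ⟨hAa, h1a⟩ := max_le_iff.1 (hlower.trans haC)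
  have hna : exp 1 ≤ n / a := by
    rwa [le_div_iff₀ (by positivity), mul_comm, ← le_div_iff₀ (exp_pos 1)]
  have hpeak := peakTerm_le hβ0 hC hn1 (by positivity) hna haC
  calc hfun n a f ≤ M * exp (4 * β) * lowSum β a + 6 * M * peakTerm β n a :=
        hfun_le hβ0 hM.le h1a hna hf
    _ < b := by linarith [hA a hAa, mul_le_mul_of_nonneg_left hpeak (by positivity : 0 ≤ 6 * M)]
end

section
/- For every γ ≥ 1 (so that a ≥ 1 ≥ 1/γ is allowed), M > 0 and b > 0, there exists a constant C (depending on γ, b, M) such that: for all a ≥ C and n > a, if Σ_i f_{0,i}^2 e^{2iγ} ≤ M, then h_n(a, f_0) ≤ M / (a·(1 - e^{-γ})^2 · log^2(n/a)); in particular h_n(a, f_0) < b whenever a ≥ C and log(n/a) ≥ 1. -/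
lemma key_term (a n γ : ℝ) (ha : 1 ≤ a) (han : a < n) (hγ : 1 ≤ γ) (i : ℕ) (f : ℝ) :
    n ^ 2 * ((i : ℝ) + 1) * Real.exp (((i : ℝ) + 1) / a) * f ^ 2 /
      (a * (a * Real.exp (((i : ℝ) + 1) / a) + n) ^ 2)
    ≤ f ^ 2 * Real.exp (2 * ((i : ℝ) + 1) * γ) * (1 / (a * (1 - Real.exp (-γ)) ^ 2)) := by
  have ha0 : (0:ℝ) < a := lt_of_lt_of_le one_pos ha
  have hn0 : (0:ℝ) < n := lt_trans ha0 han
  set x := ((i : ℝ) + 1) / a with hx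
  have he : (0:ℝ) < Real.exp x := Real.exp_pos _
  have hexpneg : Real.exp (-γ) < 1 := by
    rw [Real.exp_lt_one_iff]; linarith
  have h1d : (0:ℝ) < 1 - Real.exp (-γ) := by linarith
  have hd : (0:ℝ) < (1 - Real.exp (-γ)) ^ 2 := pow_pos h1d 2
  have hd1 : (1 - Real.exp (-γ)) ^ 2 ≤ 1 := by
    nlinarith [Real.exp_pos (-γ)]
  have hden : (0:ℝ) < a * (a * Real.exp x + n) ^ 2 := by positivity
  have hden2 : (0:ℝ) < a * (1 - Real.exp (-γ)) ^ 2 := mul_pos ha0 hd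
  rw [mul_one_div, div_le_div_iff₀ hden hden2]
  have hn2 : n ^ 2 ≤ (a * Real.exp x + n) ^ 2 := by
    nlinarith [mul_pos ha0 he]
  have hi0 : (0:ℝ) ≤ (i:ℝ) := Nat.cast_nonneg i
  have h1 : (i:ℝ) + 1 ≤ Real.exp (((i:ℝ)+1) * γ) := by
    have := Real.add_one_le_exp (i:ℝ)
    have h2 : Real.exp (i:ℝ) ≤ Real.exp (((i:ℝ)+1) * γ) := by
      apply Real.exp_le_exp.mpr; nlinarith
    linarith
  have h2 : Real.exp x ≤ Real.exp (((i:ℝ)+1) * γ) := by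
    apply Real.exp_le_exp.mpr
    have hxle : x ≤ (i:ℝ) + 1 := div_le_self (by linarith) ha
    nlinarith
  have hc : ((i:ℝ)+1) * Real.exp x ≤ Real.exp (2 * ((i:ℝ)+1) * γ) := by
    have := mul_le_mul h1 h2 he.le (Real.exp_nonneg _)
    rw [← Real.exp_add] at this
    calc ((i:ℝ)+1) * Real.exp x ≤ Real.exp (((i:ℝ)+1)*γ + ((i:ℝ)+1)*γ) := this
      _ = Real.exp (2 * ((i:ℝ)+1) * γ) := by ring_nf
  have hcd : ((i:ℝ)+1) * Real.exp x * ((1 - Real.exp (-γ)) ^ 2)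
      ≤ Real.exp (2 * ((i:ℝ)+1) * γ) * 1 :=
    mul_le_mul hc hd1 hd.le (Real.exp_nonneg _)
  have big : n ^ 2 * (((i:ℝ)+1) * Real.exp x * ((1 - Real.exp (-γ)) ^ 2))
      ≤ (a * Real.exp x + n) ^ 2 * (Real.exp (2 * ((i:ℝ)+1) * γ) * 1) :=
    mul_le_mul hn2 hcd (by positivity) (by positivity)
  have final := mul_le_mul_of_nonneg_left big (mul_nonneg (sq_nonneg f) ha0.le)
  nlinarith [final]

/-- For `γ ≥ 1`, `M > 0`, `b > 0` there is `C > 0` such that for all `a ≥ C`, `n > a`, and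
every `f₀` in the analytic class `A^γ(M)`:
`h_n(a,f₀) ≤ M/(a(1-e^{-γ})²·log²(n/a))`, and in particular `h_n(a,f₀) < b` whenever
`log(n/a) ≥ 1`. -/
theorem stmt5 (γ M b : ℝ) (hγ : 1 ≤ γ) (hM : 0 < M) (hb : 0 < b) :
    ∃ C : ℝ, 0 < C ∧ ∀ a : ℝ, C ≤ a → ∀ n : ℝ, a < n →
      ∀ f : ℕ → ℝ,
        Summable (fun i : ℕ => f (i + 1) ^ 2 * Real.exp (2 * ((i : ℝ) + 1) * γ)) →
        (∑' i : ℕ, f (i + 1) ^ 2 * Real.exp (2 * ((i : ℝ) + 1) * γ)) ≤ M →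
        hfun n a f ≤ M / (a * (1 - Real.exp (-γ)) ^ 2 * Real.log (n / a) ^ 2) ∧
        (1 ≤ Real.log (n / a) → hfun n a f < b) := by
  have hexpneg : Real.exp (-γ) < 1 := by
    rw [Real.exp_lt_one_iff]; linarith
  have h1d : (0:ℝ) < 1 - Real.exp (-γ) := by linarith
  set d : ℝ := (1 - Real.exp (-γ)) ^ 2 with hdef
  have hd : (0:ℝ) < d := pow_pos h1d 2
  refine ⟨1 + M / (b * d), by positivity, ?_⟩
  intro a haC n han f hf hfM
  have ha : 1 ≤ a := le_trans (le_add_of_nonneg_right (div_nonneg hM.le (mul_pos hb hd).le)) haC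
  have ha0 : (0:ℝ) < a := lt_of_lt_of_le one_pos ha
  have hn0 : (0:ℝ) < n := lt_trans ha0 han
  have hL : 0 < Real.log (n / a) := Real.log_pos ((one_lt_div ha0).mpr han)
  set L := Real.log (n / a) with hLdef
  -- summability and termwise bound
  have hG : Summable (fun i : ℕ =>
      f (i + 1) ^ 2 * Real.exp (2 * ((i : ℝ) + 1) * γ) * (1 / (a * d))) :=
    hf.mul_right _
  have hterm : ∀ i : ℕ,
      n ^ 2 * ((i : ℝ) + 1) * Real.exp (((i : ℝ) + 1) / a) * f (i + 1) ^ 2 /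
        (a * (a * Real.exp (((i : ℝ) + 1) / a) + n) ^ 2)
      ≤ f (i + 1) ^ 2 * Real.exp (2 * ((i : ℝ) + 1) * γ) * (1 / (a * d)) :=
    fun i => key_term a n γ ha han hγ i (f (i + 1))
  have hnonneg : ∀ i : ℕ,
      0 ≤ n ^ 2 * ((i : ℝ) + 1) * Real.exp (((i : ℝ) + 1) / a) * f (i + 1) ^ 2 /
        (a * (a * Real.exp (((i : ℝ) + 1) / a) + n) ^ 2) := by
    intro i
    have : (0:ℝ) ≤ (i:ℝ) + 1 := by positivity
    positivity
  have hSsum : Summable (fun i : ℕ =>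
      n ^ 2 * ((i : ℝ) + 1) * Real.exp (((i : ℝ) + 1) / a) * f (i + 1) ^ 2 /
        (a * (a * Real.exp (((i : ℝ) + 1) / a) + n) ^ 2)) :=
    Summable.of_nonneg_of_le hnonneg hterm hG
  have hS : (∑' i : ℕ, n ^ 2 * ((i : ℝ) + 1) * Real.exp (((i : ℝ) + 1) / a) * f (i + 1) ^ 2 /
        (a * (a * Real.exp (((i : ℝ) + 1) / a) + n) ^ 2)) ≤ M * (1 / (a * d)) := by
    calc _ ≤ ∑' i : ℕ, f (i + 1) ^ 2 * Real.exp (2 * ((i : ℝ) + 1) * γ) * (1 / (a * d)) :=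
          Summable.tsum_le_tsum hterm hSsum hG
      _ = (∑' i : ℕ, f (i + 1) ^ 2 * Real.exp (2 * ((i : ℝ) + 1) * γ)) * (1 / (a * d)) :=
          tsum_mul_right
      _ ≤ M * (1 / (a * d)) := by
          apply mul_le_mul_of_nonneg_right hfM (by positivity)
  have hmain : hfun n a f ≤ M / (a * d * L ^ 2) := by
    unfold hfun
    have heq : M / (a * d * L ^ 2) = (1 / L ^ 2) * (M * (1 / (a * d))) := by
      rw [one_div, one_div, div_eq_mul_inv, mul_inv]
      ring
    rw [heq]
    exact mul_le_mul_of_nonneg_left hS (one_div_nonneg.mpr (sq_nonneg L))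
  refine ⟨hmain, fun hL1 => ?_⟩
  have hstep : M / (a * d * L ^ 2) ≤ M / (a * d) := by
    have hL2 : 1 ≤ L ^ 2 := by nlinarith
    apply div_le_div_of_nonneg_left hM.le (mul_pos ha0 hd)
    exact le_mul_of_one_le_right (mul_pos ha0 hd).le hL2
  have hlast : M / (a * d) < b := by
    rw [div_lt_iff₀ (by positivity)]
    have : M / (b * d) < a := by linarith
    rw [div_lt_iff₀ (by positivity)] at this
    nlinarith
  linarith
end

section
/- For all real n > 0 and a with 1 ≤ a ≤ n/e, letting I_a = a·log(n/a), the sum Σ_{i=1}^{⌊I_a⌋} n/(a·e^{i/a} + n)^2 satisfies c·(a/n)·log(n/a) ≤ Σ_{i=1}^{⌊I_a⌋} n/(a·e^{i/a} + n)^2 and Σ_{i=1}^{∞} n/(a·e^{i/a} + n)^2 ≤ C·(a/n)·log(n/a), for universal constants 0 < c ≤ C. -/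
/-!
Put `L = log (n / a)`, so that `a e^{x/a} ≤ n` exactly when `x ≤ a L`. Below `a L` every term
of the series is of size `1 / n`: at least `1 / (4 n)` and at most `1 / n`; this gives the lower
bound and bounds the first `⌊a L⌋` terms of the series by `a L / n`. Beyond `a L` the terms decay
geometrically with ratio `e^{-2/a}`, so the tail is at most `(1 - e^{-2/a})⁻¹ / n ≤ (1 + a / 2) / n`,
which is again `O((a / n) L)` since `a, L ≥ 1`.
-/

open Real Finset

noncomputable def expWeight (n a x : ℝ) : ℝ := n / (a * exp (x / a) + n) ^ 2

lemma half_le_natFloor {K : Type*} [Field K] [LinearOrder K] [IsStrictOrderedRing K]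
    [FloorSemiring K] {x : K} (hx : 1 ≤ x) : x / 2 ≤ ⌊x⌋₊ := by
  have hone : (1 : K) ≤ ⌊x⌋₊ := by exact_mod_cast Nat.le_floor (by exact_mod_cast hx)
  linarith [Nat.lt_floor_add_one x]

lemma one_sub_exp_neg_inv_le {x : ℝ} (hx : 0 < x) : (1 - exp (-x))⁻¹ ≤ 1 + x⁻¹ := by
  have hexp : exp (-x) ≤ (1 + x)⁻¹ := by
    rw [exp_neg]
    exact inv_anti₀ (by positivity) (by linarith [add_one_le_exp x])
  calc (1 - exp (-x))⁻¹ ≤ (1 - (1 + x)⁻¹)⁻¹ := by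
        apply inv_anti₀ _ (by linarith)
        rw [sub_pos]
        exact inv_lt_one_of_one_lt₀ (by linarith)
    _ = 1 + x⁻¹ := by field_simp [hx.ne']; ring

lemma tsum_le_of_le_of_le_geometric {f : ℕ → ℝ} (hf : ∀ i, 0 ≤ f i) {M r : ℝ} {N : ℕ}
    (hr₀ : 0 ≤ r) (hr₁ : r < 1) (hhead : ∀ i < N, f i ≤ M) (htail : ∀ i, f (i + N) ≤ M * r ^ i) :
    ∑' i, f i ≤ N * M + M * (1 - r)⁻¹ := by
  have hgeom : Summable fun i ↦ M * r ^ i := (summable_geometric_of_lt_one hr₀ hr₁).mul_left M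
  have htail_summable : Summable fun i ↦ f (i + N) :=
    hgeom.of_nonneg_of_le (fun i ↦ hf _) htail
  rw [← ((summable_nat_add_iff N).1 htail_summable).sum_add_tsum_nat_add N]
  gcongr
  · calc ∑ i ∈ range N, f i ≤ ∑ _i ∈ range N, M := sum_le_sum fun i hi ↦ hhead i (mem_range.1 hi)
      _ = N * M := by simp
  · calc ∑' i, f (i + N) ≤ ∑' i, M * r ^ i := htail_summable.tsum_le_tsum htail hgeom
      _ = M * (1 - r)⁻¹ := by rw [tsum_mul_left, tsum_geometric_of_lt_one hr₀ hr₁]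

section expWeight

variable {n a x : ℝ}

lemma mul_exp_div_le_iff (ha : 0 < a) (hn : 0 < n) :
    a * exp (x / a) ≤ n ↔ x ≤ a * log (n / a) := by
  rw [← le_div_iff₀' ha, ← le_log_iff_exp_le (by positivity), div_le_iff₀' ha]

lemma le_mul_exp_div_iff (ha : 0 < a) (hn : 0 < n) :
    n ≤ a * exp (x / a) ↔ a * log (n / a) ≤ x := by
  rw [← div_le_iff₀' ha, ← log_le_iff_le_exp (by positivity), le_div_iff₀' ha]

lemma expWeight_le_inv (ha : 0 ≤ a) (hn : 0 < n) : expWeight n a x ≤ n⁻¹ := by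
  have : 0 ≤ a * exp (x / a) := mul_nonneg ha (exp_pos _).le
  rw [expWeight, div_le_iff₀ (by positivity)]
  field_simp
  nlinarith

lemma inv_four_mul_le_expWeight (ha : 0 ≤ a) (hn : 0 < n) (hx : a * exp (x / a) ≤ n) :
    (4 * n)⁻¹ ≤ expWeight n a x := by
  have : 0 ≤ a * exp (x / a) := mul_nonneg ha (exp_pos _).le
  rw [expWeight, le_div_iff₀ (by positivity)]
  field_simp
  nlinarith

lemma expWeight_add_nat_le (hn : 0 < n) (hy : n ≤ a * exp (x / a)) (i : ℕ) :
    expWeight n a (x + i) ≤ n⁻¹ * exp (-(2 / a)) ^ i := by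
  have hsplit : a * exp ((x + i) / a) = a * exp (x / a) * exp (i / a) := by
    rw [mul_assoc, ← exp_add, add_div]
  have hgrowth : n * exp (i / a) ≤ a * exp ((x + i) / a) := by
    rw [hsplit]; gcongr
  have hratio : exp (-(2 / a)) ^ i = (exp (i / a) ^ 2)⁻¹ := by
    rw [← exp_nat_mul, ← exp_nat_mul, ← exp_neg]; ring_nf
  calc expWeight n a (x + i) ≤ n / (n * exp (i / a)) ^ 2 := by
        unfold expWeight
        gcongr
        linarith [exp_pos (i / a)]
    _ = n⁻¹ * exp (-(2 / a)) ^ i := by rw [hratio]; field_simp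

lemma le_sum_expWeight (ha : 0 < a) (hn : 0 < n) (haL : 1 ≤ a * log (n / a)) :
    1 / 8 * (a / n) * log (n / a) ≤ ∑ i ∈ Icc 1 ⌊a * log (n / a)⌋₊, expWeight n a i := by
  set N := ⌊a * log (n / a)⌋₊
  calc 1 / 8 * (a / n) * log (n / a) = a * log (n / a) / 2 * (4 * n)⁻¹ := by field_simp; ring
    _ ≤ N * (4 * n)⁻¹ := by gcongr; exact half_le_natFloor haL
    _ = ∑ _i ∈ Icc 1 N, (4 * n)⁻¹ := by simp
    _ ≤ ∑ i ∈ Icc 1 N, expWeight n a i := by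
      refine sum_le_sum fun i hi ↦ inv_four_mul_le_expWeight ha.le hn ?_
      rw [mul_exp_div_le_iff ha hn]
      exact (Nat.cast_le.2 (mem_Icc.1 hi).2).trans (Nat.floor_le (by linarith))

lemma tsum_expWeight_le (ha : 1 ≤ a) (hn : 0 < n) (hL : 1 ≤ log (n / a)) :
    ∑' i : ℕ, expWeight n a (i + 1) ≤ 5 / 2 * (a / n) * log (n / a) := by
  have ha₀ : 0 < a := one_pos.trans_le ha
  set N := ⌊a * log (n / a)⌋₊
  have hr : exp (-(2 / a)) < 1 := exp_lt_one_iff.2 (by simp [ha₀])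
  have htail (i : ℕ) : expWeight n a ((i + N : ℕ) + 1) ≤ n⁻¹ * exp (-(2 / a)) ^ i := by
    have hbeyond : n ≤ a * exp ((N + 1) / a) :=
      (le_mul_exp_div_iff ha₀ hn).2 (Nat.lt_floor_add_one _).le
    convert expWeight_add_nat_le hn hbeyond i using 2
    push_cast; ring
  have hgeom : (1 - exp (-(2 / a)))⁻¹ ≤ 1 + a / 2 := by
    simpa using one_sub_exp_neg_inv_le (div_pos two_pos ha₀)
  have hN : (N : ℝ) ≤ a * log (n / a) := Nat.floor_le (by nlinarith)
  calc ∑' i : ℕ, expWeight n a (i + 1)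
      ≤ N * n⁻¹ + n⁻¹ * (1 - exp (-(2 / a)))⁻¹ :=
        tsum_le_of_le_of_le_geometric (fun i ↦ by unfold expWeight; positivity) (exp_pos _).le
          hr (fun i _ ↦ expWeight_le_inv ha₀.le hn) htail
    _ ≤ a * log (n / a) * n⁻¹ + n⁻¹ * (1 + a / 2) := by gcongr
    _ = (a * log (n / a) + (1 + a / 2)) / n := by ring
    _ ≤ 5 / 2 * (a * log (n / a)) / n := by gcongr; nlinarith
    _ = 5 / 2 * (a / n) * log (n / a) := by ring

end expWeight

/-- For `1 ≤ a ≤ n/e` and `I_a = a·log(n/a)`: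
`c·(a/n)·log(n/a) ≤ Σ_{i=1}^{⌊I_a⌋} n/(a e^{i/a}+n)²` and
`Σ_{i=1}^{∞} n/(a e^{i/a}+n)² ≤ C·(a/n)·log(n/a)` for universal constants `0 < c ≤ C`. -/
theorem stmt6 :
    ∃ c C : ℝ, 0 < c ∧ c ≤ C ∧ ∀ n a : ℝ, 1 ≤ a → a ≤ n / Real.exp 1 →
      (c * (a / n) * Real.log (n / a) ≤
        ∑ i ∈ Finset.Icc 1 ⌊a * Real.log (n / a)⌋₊,
          n / (a * Real.exp ((i : ℝ) / a) + n) ^ 2) ∧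
      (∑' i : ℕ, n / (a * Real.exp (((i : ℝ) + 1) / a) + n) ^ 2 ≤
        C * (a / n) * Real.log (n / a)) := by
  refine ⟨1 / 8, 5 / 2, by norm_num, by norm_num, fun n a ha han ↦ ?_⟩
  have ha₀ : 0 < a := one_pos.trans_le ha
  have hea : exp 1 * a ≤ n := by rwa [le_div_iff₀ (exp_pos 1), mul_comm] at han
  have hn : 0 < n := lt_of_lt_of_le (by positivity) hea
  have hL : 1 ≤ log (n / a) := by
    rwa [le_log_iff_exp_le (by positivity), le_div_iff₀ ha₀]
  exact ⟨le_sum_expWeight ha₀ hn (by nlinarith), tsum_expWeight_le ha hn hL⟩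
end
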